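/- For every pattern σ ∈ S_k with k ≥ 1, every q > 0, and all positive integers m, n with m,n ≥ k, the avoidance probabilities under the Mallows(q) distribution satisfy the submultiplicativity inequality P_{m+n}(σ,q) ≤ P_m(σ,q) · P_n(σ,q). -/

import Mathlib

open scoped Classical

/-- The q-integer `[k]_q = 1 + q + ... + q^(k-1)`. -/
noncomputable def qint (q : ℝ) (k : ℕ) : ℝ := ∑ i ∈ Finset.range k, q ^ i

/-- The q-factorial `[n]_q! = [1]_q [2]_q ⋯ [n]_q`. -/
noncomputable def qfact (q : ℝ) (n : ℕ) : ℝ := ∏ i ∈ Finset.range n, qint q (i + 1)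

/-- The number of inversions of a permutation of `{0, ..., n-1}`. -/
def inversions {n : ℕ} (π : Equiv.Perm (Fin n)) : ℕ :=
  (Finset.univ.filter (fun p : Fin n × Fin n => p.1 < p.2 ∧ π p.2 < π p.1)).card

/-- The pattern `σ ∈ S_m` occurs consecutively in `π ∈ S_n` starting at (0-indexed) position `j`:
the window `π_j, ..., π_{j+m-1}` is order-isomorphic to `σ`. -/
def occursAt {m n : ℕ} (σ : Equiv.Perm (Fin m)) (π : Equiv.Perm (Fin n)) (j : ℕ) : Prop :=
  ∃ h : j + m ≤ n, ∀ a b : Fin m,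
    σ a < σ b ↔
      π ⟨j + (a : ℕ), lt_of_lt_of_le (Nat.add_lt_add_left a.isLt j) h⟩ <
      π ⟨j + (b : ℕ), lt_of_lt_of_le (Nat.add_lt_add_left b.isLt j) h⟩

/-- `π` avoids `σ` as a consecutive pattern. -/
def avoids {m n : ℕ} (σ : Equiv.Perm (Fin m)) (π : Equiv.Perm (Fin n)) : Prop :=
  ∀ j : ℕ, ¬ occursAt σ π j

/-- `P_n(σ, q)`: the probability that a Mallows(q) random permutation of length `n`
avoids `σ` as a consecutive pattern. -/
noncomputable def Pn (m : ℕ) (σ : Equiv.Perm (Fin m)) (q : ℝ) (n : ℕ) : ℝ :=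
  (∑ π ∈ Finset.univ.filter (fun π : Equiv.Perm (Fin n) => avoids σ π),
    q ^ inversions π) / qfact q n

/-!
Cutting `π ∈ S_{m+n}` after position `m` gives the standardized blocks `α ∈ S_m`, `β ∈ S_n` and
the set `A` of the first `m` values. This is a bijection `S_{m+n} ≃ S_m × S_n × {A : |A| = m}`
(injective by construction, then by counting) under which `inv π = inv α + inv β + cross A`,
where `cross A` counts the pairs with the larger value in `A` placed first. Summing `q ^ inv`
gives `[m+n]_q! = [m]_q! [n]_q! C` with `C = ∑_A q ^ cross A`. Both blocks of a σ-avoider avoid σ,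
so the weight of the σ-avoiders in `S_{m+n}` is at most `C` times the product of the weights in
`S_m` and `S_n`; dividing by `[m+n]_q!` gives the inequality.
-/

open Finset

section Standardize

variable {α : Type*} [LinearOrder α] {m : ℕ}

noncomputable def standardize (f : Fin m ↪ α) : Equiv.Perm (Fin m) :=
  Equiv.ofBijective
    (fun i => ((univ.map f).orderIsoOfFin (by simp)).symm ⟨f i, mem_map_of_mem f (mem_univ i)⟩)
    (Finite.injective_iff_bijective.mp fun _ _ h =>
      f.injective (congrArg Subtype.val ((OrderIso.symm _).injective h)))

theorem standardize_lt_standardize (f : Fin m ↪ α) (a b : Fin m) :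
    standardize f a < standardize f b ↔ f a < f b := by
  simp [standardize]

theorem orderEmbOfFin_standardize (f : Fin m ↪ α) {s : Finset α} (hs : s.card = m)
    (hf : ∀ i, f i ∈ s) (i : Fin m) : s.orderEmbOfFin hs (standardize f i) = f i := by
  obtain rfl : univ.map f = s :=
    eq_of_subset_of_card_le (by simpa [subset_iff] using hf) (by simp [hs])
  simp [standardize, ← coe_orderIsoOfFin_apply]

end Standardize

def crossInversions {N : ℕ} (A : Finset (Fin N)) : ℕ :=
  #{p : Fin N × Fin N | p.1 ∈ A ∧ p.2 ∉ A ∧ p.2 < p.1}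

/-- The Gaussian binomial `[m+n choose m]_q` (see `qfact_add`). -/
noncomputable def qbinom (q : ℝ) (m n : ℕ) : ℝ :=
  ∑ A : {A : Finset (Fin (m + n)) // A.card = m}, q ^ crossInversions A.1

namespace Equiv.Perm

variable {m n : ℕ}

section Blocks

variable (π : Perm (Fin (m + n)))

def leftValues : Finset (Fin (m + n)) :=
  univ.map ((Fin.castAddEmb n).trans π.toEmbedding)

noncomputable def leftPart : Perm (Fin m) :=
  standardize ((Fin.castAddEmb n).trans π.toEmbedding)

noncomputable def rightPart : Perm (Fin n) :=
  standardize ((Fin.natAddEmb m).trans π.toEmbedding)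

theorem card_leftValues : π.leftValues.card = m := by
  simp [leftValues]

theorem card_compl_leftValues : π.leftValuesᶜ.card = n := by
  simp [card_compl, card_leftValues]

theorem apply_castAdd_mem_leftValues (i : Fin m) : π (Fin.castAdd n i) ∈ π.leftValues := by
  simp [leftValues]

theorem apply_natAdd_notMem_leftValues (j : Fin n) : π (Fin.natAdd m j) ∉ π.leftValues := by
  simp only [leftValues, mem_map, mem_univ, Function.Embedding.trans_apply, Fin.coe_castAddEmb,
    Function.Embedding.coeFn_mk, EmbeddingLike.apply_eq_iff_eq, Fin.ext_iff, Fin.val_castAdd,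
    Fin.val_natAdd, true_and, not_exists]
  omega

theorem orderEmbOfFin_leftPart (i : Fin m) :
    π.leftValues.orderEmbOfFin π.card_leftValues (π.leftPart i) = π (Fin.castAdd n i) :=
  orderEmbOfFin_standardize _ _ π.apply_castAdd_mem_leftValues i

theorem orderEmbOfFin_rightPart (j : Fin n) :
    π.leftValuesᶜ.orderEmbOfFin π.card_compl_leftValues (π.rightPart j) = π (Fin.natAdd m j) :=
  orderEmbOfFin_standardize _ _ (fun _ => mem_compl.mpr (π.apply_natAdd_notMem_leftValues _)) j

end Blocks

noncomputable def blockDecomposition (π : Perm (Fin (m + n))) :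
    (Perm (Fin m) × Perm (Fin n)) × {A : Finset (Fin (m + n)) // A.card = m} :=
  ((π.leftPart, π.rightPart), ⟨π.leftValues, π.card_leftValues⟩)

theorem blockDecomposition_injective :
    Function.Injective (blockDecomposition : Perm (Fin (m + n)) → _) := by
  intro π τ h
  simp only [blockDecomposition, Prod.mk.injEq, Subtype.mk.injEq] at h
  obtain ⟨⟨hleft, hright⟩, hvalues⟩ := h
  ext x
  induction x using Fin.addCases with
  | left i =>
    rw [← orderEmbOfFin_leftPart, ← orderEmbOfFin_leftPart]
    simp only [hleft, hvalues]
  | right j =>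
    rw [← orderEmbOfFin_rightPart, ← orderEmbOfFin_rightPart]
    simp only [hright, hvalues]

noncomputable def blockDecompositionEquiv :
    Perm (Fin (m + n)) ≃
      (Perm (Fin m) × Perm (Fin n)) × {A : Finset (Fin (m + n)) // A.card = m} :=
  Equiv.ofBijective blockDecomposition <|
    (Fintype.bijective_iff_injective_and_card _).mpr ⟨blockDecomposition_injective, by
      simp only [Fintype.card_perm, Fintype.card_prod, Fintype.card_finset_len, Fintype.card_fin]
      rw [← Nat.add_choose_mul_factorial_mul_factorial m n, Nat.choose_symm_add]
      ring⟩

theorem inversions_eq_sum {N : ℕ} (π : Perm (Fin N)) :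
    inversions π = ∑ i : Fin N, ∑ j : Fin N, if i < j ∧ π j < π i then 1 else 0 := by
  rw [inversions, card_filter, Fintype.sum_prod_type]

theorem crossInversions_leftValues (π : Perm (Fin (m + n))) :
    crossInversions π.leftValues =
      ∑ i : Fin m, ∑ j : Fin n, if π (Fin.natAdd m j) < π (Fin.castAdd n i) then 1 else 0 := by
  let e := finSumFinEquiv.trans π
  rw [crossInversions, card_filter, ← (e.prodCongr e).sum_comp, Fintype.sum_prod_type]
  simp only [Fintype.sum_sum_type, e, Equiv.prodCongr_apply, Prod.map, Equiv.trans_apply,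
    finSumFinEquiv_apply_left, finSumFinEquiv_apply_right, apply_castAdd_mem_leftValues,
    apply_natAdd_notMem_leftValues, true_and, false_and, not_true, not_false_eq_true, and_false,
    if_false, sum_const_zero, add_zero, zero_add]

theorem inversions_eq_add (π : Perm (Fin (m + n))) :
    inversions π =
      inversions π.leftPart + inversions π.rightPart + crossInversions π.leftValues := by
  have castAdd_lt_natAdd (i : Fin m) (j : Fin n) : Fin.castAdd n i < Fin.natAdd m j := by
    rw [Fin.lt_def, Fin.val_castAdd, Fin.val_natAdd]
    omega
  rw [inversions_eq_sum, inversions_eq_sum π.leftPart, inversions_eq_sum π.rightPart,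
    crossInversions_leftValues, ← finSumFinEquiv.sum_comp]
  simp only [← finSumFinEquiv.sum_comp, Fintype.sum_sum_type, finSumFinEquiv_apply_left,
    finSumFinEquiv_apply_right, leftPart, rightPart, standardize_lt_standardize,
    (Fin.strictMono_castAdd n).lt_iff_lt, Fin.natAdd_lt_natAdd_iff, castAdd_lt_natAdd,
    (castAdd_lt_natAdd _ _).not_gt, Function.Embedding.trans_apply, Fin.castAddEmb_apply,
    Fin.natAddEmb_apply, Equiv.coe_toEmbedding, true_and, false_and, if_false, sum_const_zero,
    sum_add_distrib]
  ring

theorem sum_pow_inversions_filter_leftPart_rightPart (q : ℝ) (P : Perm (Fin m) → Prop)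
    (Q : Perm (Fin n) → Prop) :
    ∑ π ∈ univ.filter (fun π : Perm (Fin (m + n)) => P π.leftPart ∧ Q π.rightPart),
        q ^ inversions π =
      (∑ α ∈ univ.filter P, q ^ inversions α) * (∑ β ∈ univ.filter Q, q ^ inversions β) *
        qbinom q m n := by
  calc _ = ∑ x : (Perm (Fin m) × Perm (Fin n)) × {A : Finset (Fin (m + n)) // A.card = m},
        (if P x.1.1 then q ^ inversions x.1.1 else 0) *
          (if Q x.1.2 then q ^ inversions x.1.2 else 0) * q ^ crossInversions x.2.1 := by
        rw [sum_filter]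
        exact Fintype.sum_equiv blockDecompositionEquiv _ _ fun π => by
          simp only [blockDecompositionEquiv, Equiv.ofBijective_apply, blockDecomposition,
            inversions_eq_add π, pow_add]
          rw [ite_zero_mul_ite_zero, ite_zero_mul]
    _ = _ := by
        rw [sum_filter, sum_filter, qbinom, Fintype.sum_mul_sum, ← Fintype.sum_prod_type',
          Fintype.sum_mul_sum, ← Fintype.sum_prod_type']

theorem sum_pow_inversions_add (q : ℝ) (m n : ℕ) :
    ∑ π : Perm (Fin (m + n)), q ^ inversions π =
      (∑ α : Perm (Fin m), q ^ inversions α) * (∑ β : Perm (Fin n), q ^ inversions β) *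
        qbinom q m n := by
  simpa using sum_pow_inversions_filter_leftPart_rightPart q (m := m) (n := n)
    (fun _ => True) (fun _ => True)

end Equiv.Perm

theorem crossInversions_compl_singleton {N : ℕ} (b : Fin (N + 1)) :
    crossInversions ({b}ᶜ : Finset (Fin (N + 1))) = N - b := by
  have hfilter : ({p | p.1 ∈ ({b}ᶜ : Finset (Fin (N + 1))) ∧ p.2 ∉ ({b}ᶜ : Finset _) ∧ p.2 < p.1} :
      Finset (Fin (N + 1) × Fin (N + 1))) = (Ioi b).map (.sectL _ b) := by
    ext ⟨x, y⟩
    simp only [mem_filter, mem_univ, mem_compl, mem_singleton, not_not, true_and, mem_map,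
      mem_Ioi, Function.Embedding.sectL_apply, Prod.mk.injEq]
    constructor
    · rintro ⟨-, rfl, hlt⟩
      exact ⟨x, hlt, rfl, rfl⟩
    · rintro ⟨a, hlt, rfl, rfl⟩
      exact ⟨hlt.ne', rfl, hlt⟩
  rw [crossInversions, hfilter, card_map, Fin.card_Ioi]
  simp

theorem qbinom_one (q : ℝ) (N : ℕ) : qbinom q N 1 = qint q (N + 1) := by
  have hbij : Function.Bijective fun b : Fin (N + 1) =>
      (⟨{b}ᶜ, by simp [card_compl]⟩ : {A : Finset (Fin (N + 1)) // A.card = N}) := by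
    refine ⟨fun b c h => by simpa using h, fun ⟨A, hA⟩ => ?_⟩
    obtain ⟨b, hb⟩ := card_eq_one.mp (show Aᶜ.card = 1 by simp [card_compl, hA])
    exact ⟨b, by simp [← hb]⟩
  rw [qbinom, ← Fintype.sum_bijective _ hbij (fun b => q ^ (N - b)) _ fun b => by
    rw [crossInversions_compl_singleton], Fin.sum_univ_eq_sum_range (fun i => q ^ (N - i)), qint,
    ← sum_range_reflect (fun i => q ^ i) (N + 1)]
  simp

theorem Equiv.Perm.sum_pow_inversions (q : ℝ) (N : ℕ) :
    ∑ π : Equiv.Perm (Fin N), q ^ inversions π = qfact q N := by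
  induction N with
  | zero => simp [inversions, qfact]
  | succ N ih =>
    have hsingleton : ∑ β : Equiv.Perm (Fin 1), q ^ inversions β = 1 := by
      simp [inversions, Fin.fin_one_eq_zero]
    rw [Equiv.Perm.sum_pow_inversions_add, ih, hsingleton, mul_one, qbinom_one, qfact, qfact,
      prod_range_succ]

theorem qfact_pos {q : ℝ} (hq : 0 < q) (N : ℕ) : 0 < qfact q N :=
  prod_pos fun _ _ => sum_pos (fun j _ => pow_pos hq j) ⟨0, by simp⟩

theorem qfact_add (q : ℝ) (m n : ℕ) : qfact q (m + n) = qfact q m * qfact q n * qbinom q m n := by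
  simp only [← Equiv.Perm.sum_pow_inversions, Equiv.Perm.sum_pow_inversions_add]

section Avoidance

variable {k m n : ℕ} (σ : Equiv.Perm (Fin k)) {π : Equiv.Perm (Fin (m + n))}

theorem avoids_leftPart (h : avoids σ π) : avoids σ π.leftPart := by
  rintro j ⟨hj, hocc⟩
  refine h j ⟨by omega, fun a b => ?_⟩
  rw [hocc, Equiv.Perm.leftPart, standardize_lt_standardize]
  rfl

theorem avoids_rightPart (h : avoids σ π) : avoids σ π.rightPart := by
  rintro j ⟨hj, hocc⟩
  refine h (m + j) ⟨by omega, fun a b => ?_⟩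
  rw [hocc, Equiv.Perm.rightPart, standardize_lt_standardize]
  simp only [Function.Embedding.trans_apply, Fin.natAddEmb_apply, Equiv.coe_toEmbedding,
    Fin.natAdd_mk, Nat.add_assoc]

end Avoidance

noncomputable def avoidWeight {k : ℕ} (σ : Equiv.Perm (Fin k)) (q : ℝ) (n : ℕ) : ℝ :=
  ∑ π ∈ univ.filter (fun π : Equiv.Perm (Fin n) => avoids σ π), q ^ inversions π

theorem Pn_eq_avoidWeight_div {k : ℕ} (σ : Equiv.Perm (Fin k)) (q : ℝ) (n : ℕ) :
    Pn k σ q n = avoidWeight σ q n / qfact q n :=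
  rfl

theorem avoidWeight_add_le {k : ℕ} (σ : Equiv.Perm (Fin k)) {q : ℝ} (hq : 0 ≤ q) (m n : ℕ) :
    avoidWeight σ q (m + n) ≤ avoidWeight σ q m * avoidWeight σ q n * qbinom q m n := by
  rw [avoidWeight, avoidWeight, avoidWeight,
    ← Equiv.Perm.sum_pow_inversions_filter_leftPart_rightPart]
  exact sum_le_sum_of_subset_of_nonneg
    (monotone_filter_right _ fun _ _ h => ⟨avoids_leftPart σ h, avoids_rightPart σ h⟩)
    fun _ _ _ => by positivity

theorem Pn_submultiplicative_general (k : ℕ) (σ : Equiv.Perm (Fin k))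
    (q : ℝ) (hq : 0 < q) (m n : ℕ) :
    Pn k σ q (m + n) ≤ Pn k σ q m * Pn k σ q n := by
  have hfact : 0 < qfact q m * qfact q n := mul_pos (qfact_pos hq m) (qfact_pos hq n)
  have hbinom : 0 < qbinom q m n :=
    pos_of_mul_pos_right (qfact_add q m n ▸ qfact_pos hq (m + n)) hfact.le
  calc Pn k σ q (m + n)
      = avoidWeight σ q (m + n) / (qfact q m * qfact q n * qbinom q m n) := by
        rw [Pn_eq_avoidWeight_div, qfact_add]
    _ ≤ avoidWeight σ q m * avoidWeight σ q n * qbinom q m n /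
          (qfact q m * qfact q n * qbinom q m n) := by
        gcongr ?_ / _
        exact avoidWeight_add_le σ hq.le m n
    _ = Pn k σ q m * Pn k σ q n := by
        rw [mul_div_mul_right _ _ hbinom.ne', ← div_mul_div_comm, Pn_eq_avoidWeight_div,
          Pn_eq_avoidWeight_div]

/-- submultiplicativity of Mallows(q) avoidance probabilities:
`P_{m+n}(σ,q) ≤ P_m(σ,q) · P_n(σ,q)`. -/
theorem Pn_submultiplicative (k : ℕ) (hk : 1 ≤ k) (σ : Equiv.Perm (Fin k))
    (q : ℝ) (hq : 0 < q) (m n : ℕ) (hm : k ≤ m) (hn : k ≤ n) :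
    Pn k σ q (m + n) ≤ Pn k σ q m * Pn k σ q n :=
  Pn_submultiplicative_general k σ q hq m n
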